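/- arXiv:2603.00557 — 3 statements merged into one kernel-verified Lean document; each statement's English description precedes it below -/
import Mathlib

section
/- Let n be a positive integer, C ⊆ ℝⁿ a convex set, φ : ℝⁿ → ℝ a convex function, x₀ ∈ C, σ₁ ≥ 0, and σ₂ > 0. Suppose x⁺ ∈ C minimizes the function x ↦ φ(x) + σ₁‖x − x₀‖₁ + (σ₂/2)‖x − x₀‖² over C, where ‖·‖ is the Euclidean norm and ‖d‖₁ := Σᵢ|dᵢ|. Then φ(x₀) ≥ φ(x⁺) + σ₁‖x⁺ − x₀‖₁ + σ₂‖x⁺ − x₀‖². -/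
/-!
Along the segment `x_t = (1 - t) x₀ + t x⁺`, `t ∈ (0, 1)`, convexity of `f = φ + σ₁‖· - x₀‖₁`
and minimality of `x⁺` give
`f x⁺ + (σ₂/2)‖x⁺ - x₀‖² ≤ (1 - t) f x₀ + t f x⁺ + (σ₂/2) t² ‖x⁺ - x₀‖²`.
Dividing by `1 - t` leaves `f x⁺ + (σ₂/2)(1 + t)‖x⁺ - x₀‖² ≤ f x₀`, and letting `t → 1`
doubles the proximal coefficient.
-/

open Set

theorem ConvexOn.add_mul_sq_norm_sub_le_of_isMinOn {E : Type*} [SeminormedAddCommGroup E]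
    [NormedSpace ℝ E] {C : Set E} {f : E → ℝ} (hf : ConvexOn ℝ C f) {x₀ x : E}
    (hx₀ : x₀ ∈ C) (hx : x ∈ C) (σ : ℝ)
    (hmin : IsMinOn (fun y ↦ f y + σ / 2 * ‖y - x₀‖ ^ 2) C x) :
    f x + σ * ‖x - x₀‖ ^ 2 ≤ f x₀ := by
  set Q := ‖x - x₀‖ ^ 2
  have hslope : ∀ t ∈ Ioo (0 : ℝ) 1, f x + σ / 2 * (1 + t) * Q ≤ f x₀ := by
    rintro t ⟨ht₀, ht₁⟩
    have hmem : (1 - t) • x₀ + t • x ∈ C := hf.1 hx₀ hx (by linarith) ht₀.le (by ring)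
    have hconv : f ((1 - t) • x₀ + t • x) ≤ (1 - t) * f x₀ + t * f x :=
      hf.2 hx₀ hx (by linarith) ht₀.le (by ring)
    have hdist : ‖(1 - t) • x₀ + t • x - x₀‖ ^ 2 = t ^ 2 * Q := by
      rw [show (1 - t) • x₀ + t • x - x₀ = t • (x - x₀) by module, norm_smul, mul_pow,
        Real.norm_eq_abs, sq_abs]
    have hle := isMinOn_iff.mp hmin _ hmem
    simp only [hdist] at hle
    nlinarith
  have hlim := le_on_closure hslope (by fun_prop) continuousOn_const
    (x := 1) (by rw [closure_Ioo zero_ne_one]; exact right_mem_Icc.mpr zero_le_one)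
  linarith

theorem convexOn_sum_abs_sub {ι : Type*} [Fintype ι] (x₀ : EuclideanSpace ℝ ι) :
    ConvexOn ℝ univ fun x : EuclideanSpace ℝ ι ↦ ∑ i, |x i - x₀ i| := by
  refine ⟨convex_univ, fun x _ y _ a b ha hb hab ↦ ?_⟩
  simp only [smul_eq_mul, Finset.mul_sum, ← Finset.sum_add_distrib]
  refine Finset.sum_le_sum fun i _ ↦ ?_
  have hsplit : ((a • x + b • y) i - x₀ i) = a * (x i - x₀ i) + b * (y i - x₀ i) := by
    simp only [PiLp.add_apply, PiLp.smul_apply, smul_eq_mul]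
    linear_combination x₀ i * hab
  rw [hsplit]
  calc |a * (x i - x₀ i) + b * (y i - x₀ i)|
      ≤ |a * (x i - x₀ i)| + |b * (y i - x₀ i)| := abs_add_le _ _
    _ = a * |x i - x₀ i| + b * |y i - x₀ i| := by
      rw [abs_mul, abs_mul, abs_of_nonneg ha, abs_of_nonneg hb]

theorem double_proximal_descent_general (n : ℕ)
    (C : Set (EuclideanSpace ℝ (Fin n))) (hC : Convex ℝ C)
    (φ : EuclideanSpace ℝ (Fin n) → ℝ)
    (hφ : ConvexOn ℝ (Set.univ : Set (EuclideanSpace ℝ (Fin n))) φ)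
    (x₀ : EuclideanSpace ℝ (Fin n)) (hx₀ : x₀ ∈ C)
    (σ₁ σ₂ : ℝ) (hσ₁ : 0 ≤ σ₁)
    (xp : EuclideanSpace ℝ (Fin n)) (hxp : xp ∈ C)
    (hmin : ∀ x ∈ C,
      φ xp + σ₁ * (∑ i, |xp i - x₀ i|) + σ₂ / 2 * ‖xp - x₀‖ ^ 2
        ≤ φ x + σ₁ * (∑ i, |x i - x₀ i|) + σ₂ / 2 * ‖x - x₀‖ ^ 2) :
    φ x₀ ≥ φ xp + σ₁ * (∑ i, |xp i - x₀ i|) + σ₂ * ‖xp - x₀‖ ^ 2 := by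
  have hconv : ConvexOn ℝ C fun x ↦ φ x + σ₁ * ∑ i, |x i - x₀ i| :=
    (hφ.subset (subset_univ C) hC).add
      (((convexOn_sum_abs_sub x₀).subset (subset_univ C) hC).smul hσ₁)
  have hdescent :=
    hconv.add_mul_sq_norm_sub_le_of_isMinOn hx₀ hxp σ₂ (isMinOn_iff.mpr hmin)
  simpa only [sub_self, abs_zero, Finset.sum_const_zero, mul_zero, add_zero] using hdescent

/-- Double-proximal descent inequality. If `x⁺ ∈ C` minimizes
`x ↦ φ(x) + σ₁‖x − x₀‖₁ + (σ₂/2)‖x − x₀‖²` over a convex set `C ∋ x₀`, with `φ` convex,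
`σ₁ ≥ 0`, `σ₂ > 0`, then `φ(x₀) ≥ φ(x⁺) + σ₁‖x⁺ − x₀‖₁ + σ₂‖x⁺ − x₀‖²`. -/
theorem double_proximal_descent (n : ℕ) (hn : 0 < n)
    (C : Set (EuclideanSpace ℝ (Fin n))) (hC : Convex ℝ C)
    (φ : EuclideanSpace ℝ (Fin n) → ℝ)
    (hφ : ConvexOn ℝ (Set.univ : Set (EuclideanSpace ℝ (Fin n))) φ)
    (x₀ : EuclideanSpace ℝ (Fin n)) (hx₀ : x₀ ∈ C)
    (σ₁ σ₂ : ℝ) (hσ₁ : 0 ≤ σ₁) (hσ₂ : 0 < σ₂)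
    (xp : EuclideanSpace ℝ (Fin n)) (hxp : xp ∈ C)
    (hmin : ∀ x ∈ C,
      φ xp + σ₁ * (∑ i, |xp i - x₀ i|) + σ₂ / 2 * ‖xp - x₀‖ ^ 2
        ≤ φ x + σ₁ * (∑ i, |x i - x₀ i|) + σ₂ / 2 * ‖x - x₀‖ ^ 2) :
    φ x₀ ≥ φ xp + σ₁ * (∑ i, |xp i - x₀ i|) + σ₂ * ‖xp - x₀‖ ^ 2 :=
  double_proximal_descent_general n C hC φ hφ x₀ hx₀ σ₁ σ₂ hσ₁ xp hxp hmin
end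

section
/- Let N, m be positive integers; for i = 1, …, N let x_i, p_i, n_i, pμ_i, nμ_i ∈ ℝᵐ and ρ_i > 0; let τ > 0, z₀ ∈ ℝᵐ, and u ∈ ℝᵐ with u_j ≥ 0 for all j, and suppose z₀ lies in the box [−u, u]. Let z⁺ minimize h(z) := Σ_{i=1}^N [ ⟨pμ_i, x_i − z + p_i⟩ + ⟨nμ_i, z − x_i + n_i⟩ + (ρ_i/2)(‖x_i − z + p_i‖² + ‖z − x_i + n_i‖²) + (τ/2)‖z − z₀‖² ] over [−u, u], and let h₀(z) := Σ_{i=1}^N [ ⟨pμ_i, x_i − z + p_i⟩ + ⟨nμ_i, z − x_i + n_i⟩ + (ρ_i/2)(‖x_i − z + p_i‖² + ‖z − x_i + n_i‖²) ] be the objective without the proximal terms. Then h₀(z₀) ≥ h₀(z⁺) + (Nτ + Σ_{i=1}^N ρ_i)‖z⁺ − z₀‖². -/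
open scoped RealInnerProductSpace


lemma quad_expand {E : Type*} [NormedAddCommGroup E] [InnerProductSpace ℝ E]
    (pμ nμ A B C d : E) (ρ τ : ℝ) :
    ⟪pμ, A - d⟫ + ⟪nμ, B + d⟫ + ρ/2*(‖A - d‖^2 + ‖B + d‖^2) + τ/2*‖C + d‖^2
    = ⟪pμ, A⟫ + ⟪nμ, B⟫ + ρ/2*(‖A‖^2+‖B‖^2) + τ/2*‖C‖^2
      + ⟪nμ - pμ - ρ•A + ρ•B + τ•C, d⟫ + (ρ+τ/2)*‖d‖^2 := by
  simp [inner_sub_right, inner_add_right, inner_sub_left, inner_add_left, real_inner_smul_left,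
    norm_sub_sq_real, norm_add_sq_real]
  ring


/-- Descent inequality of the common-variable (Z-) update. If `z₀ ∈ [−u, u]`
and `z⁺` minimizes `h` (the Z-objective with proximal terms) over the box, then the
objective `h₀` without proximal terms satisfies
`h₀(z₀) ≥ h₀(z⁺) + (Nτ + Σᵢ ρᵢ)‖z⁺ − z₀‖²`. -/
theorem common_variable_update_descent (N m : ℕ) (hN : 0 < N) (hm : 0 < m)
    (x p n pμ nμ : Fin N → EuclideanSpace ℝ (Fin m))
    (ρ : Fin N → ℝ) (hρ : ∀ i, 0 < ρ i) (τ : ℝ) (hτ : 0 < τ)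
    (z₀ : EuclideanSpace ℝ (Fin m)) (u : Fin m → ℝ) (hu : ∀ j, 0 ≤ u j)
    (box : Set (EuclideanSpace ℝ (Fin m)))
    (hbox : box = {z | ∀ j, -u j ≤ z j ∧ z j ≤ u j})
    (hz₀ : z₀ ∈ box)
    (h h₀ : EuclideanSpace ℝ (Fin m) → ℝ)
    (hh : ∀ z, h z = ∑ i,
      (⟪pμ i, x i - z + p i⟫ + ⟪nμ i, z - x i + n i⟫
        + ρ i / 2 * (‖x i - z + p i‖ ^ 2 + ‖z - x i + n i‖ ^ 2)
        + τ / 2 * ‖z - z₀‖ ^ 2))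
    (hh₀ : ∀ z, h₀ z = ∑ i,
      (⟪pμ i, x i - z + p i⟫ + ⟪nμ i, z - x i + n i⟫
        + ρ i / 2 * (‖x i - z + p i‖ ^ 2 + ‖z - x i + n i‖ ^ 2)))
    (zp : EuclideanSpace ℝ (Fin m)) (hzp_mem : zp ∈ box)
    (hzp_min : ∀ z ∈ box, h zp ≤ h z) :
    h₀ z₀ ≥ h₀ zp + (N * τ + ∑ i, ρ i) * ‖zp - z₀‖ ^ 2 := by
  classical
  set d : EuclideanSpace ℝ (Fin m) := z₀ - zp with hd
  set α : ℝ := (∑ i, ρ i) + N * (τ/2) with hα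
  set G : EuclideanSpace ℝ (Fin m) :=
    ∑ i, (nμ i - pμ i - ρ i • (x i - zp + p i) + ρ i • (zp - x i + n i) + τ • (zp - z₀)) with hG
  have hρsum : 0 < ∑ i, ρ i :=
    Finset.sum_pos (fun i _ => hρ i) (Finset.univ_nonempty_iff.2 ⟨⟨0, hN⟩⟩)
  have hαpos : 0 < α := by
    have : (0:ℝ) < N := by exact_mod_cast hN
    have := hτ
    rw [hα]; positivity
  -- quadratic expansion of h around zp
  have hexp : ∀ z : EuclideanSpace ℝ (Fin m),
      h z = h zp + ⟪G, z - zp⟫ + α * ‖z - zp‖^2 := by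
    intro z
    rw [hh z, hh zp]
    have key : ∀ i : Fin N,
        (⟪pμ i, x i - z + p i⟫ + ⟪nμ i, z - x i + n i⟫
          + ρ i / 2 * (‖x i - z + p i‖ ^ 2 + ‖z - x i + n i‖ ^ 2)
          + τ / 2 * ‖z - z₀‖ ^ 2)
        = (⟪pμ i, x i - zp + p i⟫ + ⟪nμ i, zp - x i + n i⟫
          + ρ i / 2 * (‖x i - zp + p i‖ ^ 2 + ‖zp - x i + n i‖ ^ 2)
          + τ / 2 * ‖zp - z₀‖ ^ 2)
          + ⟪nμ i - pμ i - ρ i • (x i - zp + p i) + ρ i • (zp - x i + n i) + τ • (zp - z₀), z - zp⟫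
          + (ρ i + τ/2) * ‖z - zp‖^2 := by
      intro i
      have h1 : x i - z + p i = (x i - zp + p i) - (z - zp) := by abel
      have h2 : z - x i + n i = (zp - x i + n i) + (z - zp) := by abel
      have h3 : z - z₀ = (zp - z₀) + (z - zp) := by abel
      rw [h1, h2, h3]
      exact quad_expand (pμ i) (nμ i) (x i - zp + p i) (zp - x i + n i) (zp - z₀) (z - zp)
        (ρ i) τ
    rw [Finset.sum_congr rfl (fun i _ => key i), Finset.sum_add_distrib,
      Finset.sum_add_distrib, hG, sum_inner, ← Finset.sum_mul, Finset.sum_add_distrib,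
      Finset.sum_const, Finset.card_univ, Fintype.card_fin, nsmul_eq_mul, hα]
    congr 1
    rw [Finset.sum_add_distrib, Finset.sum_const, Finset.card_univ, Fintype.card_fin,
      nsmul_eq_mul]
  -- variational inequality step
  have hstep : ∀ t : ℝ, 0 < t → t ≤ 1 → 0 ≤ t * ⟪G, d⟫ + α * t^2 * ‖d‖^2 := by
    intro t ht ht1
    have hmem : zp + t • d ∈ box := by
      rw [hbox]
      intro j
      have hz0j := (hbox ▸ hz₀) j
      have hzpj := (hbox ▸ hzp_mem) j
      have happ : (zp + t • d) j = zp j + t * (z₀ j - zp j) := by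
        simp [hd]
      rw [happ]
      constructor <;> nlinarith [hz0j.1, hz0j.2, hzpj.1, hzpj.2]
    have hmin := hzp_min _ hmem
    rw [hexp (zp + t • d)] at hmin
    have hsimp : zp + t • d - zp = t • d := by abel
    rw [hsimp, real_inner_smul_right, norm_smul] at hmin
    simp only [Real.norm_eq_abs] at hmin
    have habs : (|t| * ‖d‖) ^ 2 = t ^ 2 * ‖d‖ ^ 2 := by rw [mul_pow, sq_abs]
    rw [habs] at hmin
    linarith
  have hGd : 0 ≤ ⟪G, d⟫ := by
    by_contra hneg
    push_neg at hneg
    have hd0 : d ≠ 0 := by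
      intro h0
      rw [h0, inner_zero_right] at hneg
      exact lt_irrefl _ hneg
    have hdpos : 0 < ‖d‖^2 := pow_pos (norm_pos_iff.mpr hd0) 2
    set t : ℝ := min 1 (-⟪G, d⟫ / (2 * α * ‖d‖^2)) with htdef
    have ht0 : 0 < t := lt_min one_pos (div_pos (neg_pos.2 hneg) (mul_pos (mul_pos two_pos hαpos) hdpos))
    have ht1 : t ≤ 1 := min_le_left _ _
    have hst := hstep t ht0 ht1
    have htle : t ≤ -⟪G, d⟫ / (2 * α * ‖d‖^2) := min_le_right _ _
    have h2 : t * (2 * α * ‖d‖^2) ≤ -⟪G, d⟫ := (le_div_iff₀ (mul_pos (mul_pos two_pos hαpos) hdpos)).mp htle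
    nlinarith [mul_le_mul_of_nonneg_left h2 ht0.le, mul_pos ht0 (neg_pos.2 hneg)]
  have hfin := hexp z₀
  have e1 : h z₀ = h₀ z₀ := by
    rw [hh, hh₀]
    refine Finset.sum_congr rfl fun i _ => ?_
    simp
  have e2 : h zp = h₀ zp + N * (τ/2) * ‖zp - z₀‖^2 := by
    rw [hh, hh₀, Finset.sum_add_distrib, Finset.sum_const, Finset.card_univ,
      Fintype.card_fin, nsmul_eq_mul]
    ring
  have hrev : ‖z₀ - zp‖ = ‖zp - z₀‖ := norm_sub_rev _ _
  rw [e1, e2, ← hd, hrev] at hfin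
  have : h₀ z₀ ≥ h₀ zp + (N * (τ/2) + α) * ‖zp - z₀‖^2 := by nlinarith [sq_nonneg ‖zp - z₀‖]
  rw [hα] at this
  calc h₀ z₀ ≥ h₀ zp + (N * (τ/2) + ((∑ i, ρ i) + N * (τ/2))) * ‖zp - z₀‖^2 := this
    _ = h₀ zp + (N * τ + ∑ i, ρ i) * ‖zp - z₀‖ ^ 2 := by ring
end

section
/- Let ρ > 0, γ > 0, α > 0 and μ ≥ 0 be real numbers, let K ∈ ℕ, and let (F_k) and (Y_k) be real sequences such that for all k ≥ K: Y_{k+1} − Y_k = −( ρ (F_{k+1} + Y_k) + μ ) / (γ + ρ), and μ/α < F_{k+1} + Y_{k+1}. Assume moreover Σ_{k=K}^∞ |Y_{k+1} − Y_k|² < ∞. Then μ = 0 and lim_{k→∞} (F_{k+1} + Y_{k+1}) = 0. -/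
open Filter Topology

/-!
Solving the slack recursion for the residual gives
`F_{k+1} + Y_{k+1} = -(γ (Y_{k+1} - Y_k) + μ) / ρ`. Square-summability forces the slack steps
to vanish, so the residual tends to `-μ / ρ ≤ 0`; passing to the limit in `μ / α < F_{k+1} + Y_{k+1}`
gives `μ / α ≤ -μ / ρ`, which for `μ ≥ 0` leaves only `μ = 0`.
-/

lemma tendsto_zero_of_summable_abs_sq {u : ℕ → ℝ} (hu : Summable fun k => |u k| ^ 2) :
    Tendsto u atTop (𝓝 0) := by
  have habs : Tendsto (fun k => |u k|) atTop (𝓝 0) := by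
    simpa [Real.sqrt_sq_eq_abs] using hu.tendsto_atTop_zero.sqrt
  exact (tendsto_zero_iff_abs_tendsto_zero u).mpr habs

lemma residual_eq_of_slack_step {ρ γ μ f y y' : ℝ} (hρ : ρ ≠ 0) (hγρ : γ + ρ ≠ 0)
    (h : y' - y = -(ρ * (f + y) + μ) / (γ + ρ)) :
    f + y' = -(γ * (y' - y) + μ) / ρ := by
  rw [eq_div_iff hγρ] at h
  rw [eq_div_iff hρ]
  linear_combination h

lemma eq_zero_of_div_le_neg_div {α ρ μ : ℝ} (hα : 0 < α) (hρ : 0 < ρ) (hμ : 0 ≤ μ)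
    (h : μ / α ≤ -μ / ρ) : μ = 0 := by
  rw [div_le_div_iff₀ hα hρ] at h
  nlinarith

/-- Frozen-dual case of the slack recursion. If for all `k ≥ K`
`Y_{k+1} − Y_k = −(ρ(F_{k+1} + Y_k) + μ)/(γ + ρ)` and `μ/α < F_{k+1} + Y_{k+1}`,
with `Σ_{k≥K} |Y_{k+1} − Y_k|² < ∞`, then `μ = 0` and `F_{k+1} + Y_{k+1} → 0`. -/
theorem frozen_dual_slack_recursion_limit (ρ γ α μ : ℝ)
    (hρ : 0 < ρ) (hγ : 0 < γ) (hα : 0 < α) (hμ : 0 ≤ μ)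
    (K : ℕ) (F Y : ℕ → ℝ)
    (hrec : ∀ k, K ≤ k → Y (k + 1) - Y k = -(ρ * (F (k + 1) + Y k) + μ) / (γ + ρ))
    (hlt : ∀ k, K ≤ k → μ / α < F (k + 1) + Y (k + 1))
    (hsum : Summable fun k : ℕ => |Y (K + k + 1) - Y (K + k)| ^ 2) :
    μ = 0 ∧ Tendsto (fun k => F (k + 1) + Y (k + 1)) atTop (nhds 0) := by
  have hstep : Tendsto (fun k => Y (k + 1) - Y k) atTop (𝓝 0) := by
    rw [← tendsto_add_atTop_iff_nat K]
    simpa only [add_comm _ K, add_right_comm] using tendsto_zero_of_summable_abs_sq hsum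
  have hresidual : ∀ᶠ k in atTop, -(γ * (Y (k + 1) - Y k) + μ) / ρ = F (k + 1) + Y (k + 1) :=
    (eventually_ge_atTop K).mono fun k hk =>
      (residual_eq_of_slack_step hρ.ne' (by positivity) (hrec k hk)).symm
  have hlim : Tendsto (fun k => F (k + 1) + Y (k + 1)) atTop (𝓝 (-μ / ρ)) := by
    refine Tendsto.congr' hresidual ?_
    simpa using ((hstep.const_mul γ).add_const μ).neg.div_const ρ
  have hμ0 : μ = 0 := eq_zero_of_div_le_neg_div hα hρ hμ <|
    ge_of_tendsto hlim ((eventually_ge_atTop K).mono fun k hk => (hlt k hk).le)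
  exact ⟨hμ0, by simpa [hμ0] using hlim⟩
end
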